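/- Let $C(z,u)$ be a power series with non-negative coefficients, $z \mid C(z,u)$, $u^k \nmid C(z,u)$, $C(z,0)\ne 0$, and fix $k\ge 1$. Among the $k$ Puiseux series solutions $u(z)$ with $u(0)=0$ of $u^k = C(z,u)$, there is exactly one, $u_1(z)$, that is real-valued and positive for small $z>0$, and $|u_i(z)| \le u_1(z)$ holds for every solution $u_i$ and all sufficiently small $z>0$. -/

import Mathlib

open Set Filter Topology

/-!
Write `F z x = ∑ C i m z^i x^m` and `k = n + 1`. For `x > 0` the equation `x^k = F z x` reads
`x = F z x / x^n`. In `F z x / x^n` the terms with `m ≤ n` are nonincreasing in `x`, and since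
`z ∣ F` the remaining ones have Lipschitz constant `O(z)` on `(0, R/2]`. So for small `z` the
defect `x - F z x / x^n` is strictly increasing on `(0, R/2]`: it has at most one zero, which exists
by the intermediate value theorem (`F z 0 > 0` as `C(z,0) ≠ 0`, while `F z (R/2) = O(z)`), and
every subsolution `x^k ≤ F z x` lies below it. A complex solution `w` gives the subsolution `|w|`,
because `|F(z,w)| ≤ F(z,|w|)`. The root is continuous in `z` because the defect is, and changes sign
at the root.
-/

lemma mul_pow_le_div_mul_mul_pow {c z R : ℝ} {i : ℕ} (hR : 0 < R) (hc : 0 ≤ c) (hz : 0 ≤ z)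
    (hzR : z ≤ R) (hi : i = 0 → c = 0) : c * z ^ i ≤ z / R * (c * R ^ i) := by
  rcases i with _ | j
  · simp [hi rfl]
  calc c * z ^ (j + 1) = z * (c * z ^ j) := by ring
    _ ≤ z * (c * R ^ j) := by gcongr
    _ = z / R * (c * R ^ (j + 1)) := by field_simp; ring

/-- The factor `2 ^ m` absorbs the `m - n` of the mean value bound, so that for `2 * a = R` the
bound is summable against coefficients that converge at `R`. -/
lemma div_pow_sub_div_pow_le {y v a : ℝ} (m n : ℕ) (hy : 0 < y) (hyv : y ≤ v) (hva : v ≤ a) :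
    v ^ m / v ^ n - y ^ m / y ^ n ≤ (2 * a) ^ m / a ^ (n + 1) * (v - y) := by
  have hv : 0 < v := hy.trans_le hyv
  have ha : 0 < a := hv.trans_le hva
  rcases le_or_gt m n with hmn | hnm
  · obtain ⟨d, rfl⟩ := Nat.exists_eq_add_of_le hmn
    have hanti : v ^ m / v ^ (m + d) ≤ y ^ m / y ^ (m + d) := by
      rw [pow_add, pow_add, div_mul_cancel_left₀ (by positivity),
        div_mul_cancel_left₀ (by positivity)]
      exact inv_anti₀ (by positivity) (by gcongr)
    have : 0 ≤ (2 * a) ^ m / a ^ (m + d + 1) * (v - y) := by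
      have := sub_nonneg.2 hyv; positivity
    linarith
  obtain ⟨e, rfl⟩ : ∃ e, m = n + (e + 1) := ⟨m - n - 1, by omega⟩
  have hcancel : ∀ t : ℝ, t ≠ 0 → t ^ (n + (e + 1)) / t ^ n = t ^ (e + 1) := fun t ht => by
    rw [pow_add, mul_div_cancel_left₀ _ (pow_ne_zero _ ht)]
  have htwo : ((e + 1 : ℕ) : ℝ) ≤ 2 ^ (n + (e + 1)) := by
    exact_mod_cast Nat.lt_two_pow_self.le.trans (Nat.pow_le_pow_right two_pos (by omega))
  rw [hcancel v hv.ne', hcancel y hy.ne']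
  calc v ^ (e + 1) - y ^ (e + 1) ≤ |v - y| * (e + 1 : ℕ) * max |v| |y| ^ e :=
        (le_abs_self _).trans (abs_pow_sub_pow_le v y (e + 1))
    _ = (v - y) * (e + 1 : ℕ) * v ^ e := by
        rw [abs_of_nonneg (sub_nonneg.2 hyv), abs_of_pos hv, abs_of_pos hy, max_eq_left hyv]
    _ ≤ (v - y) * 2 ^ (n + (e + 1)) * a ^ e := by
        have := sub_nonneg.2 hyv; gcongr
    _ = (2 * a) ^ (n + (e + 1)) / a ^ (n + 1) * (v - y) := by
        field_simp; ring

lemma continuousWithinAt_of_sign_change {g : ℝ → ℝ → ℝ} {u : ℝ → ℝ} {S : Set ℝ} {a z₀ : ℝ}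
    (hu : ∀ z ∈ S, u z ∈ Ico 0 a)
    (hsign : ∀ z ∈ S, ∀ x ∈ Ioo 0 a, (g z x < 0 ↔ x < u z) ∧ (0 < g z x ↔ u z < x))
    (hg : ∀ x ∈ Ioo 0 a, ContinuousWithinAt (g · x) S z₀) (hz₀ : z₀ ∈ S) :
    ContinuousWithinAt u S z₀ := by
  have hS : ∀ᶠ z in 𝓝[S] z₀, z ∈ S := self_mem_nhdsWithin
  obtain ⟨hu₀, hua⟩ := hu z₀ hz₀
  refine tendsto_order.2 ⟨fun x' hx' => ?_, fun x' hx' => ?_⟩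
  · rcases lt_or_ge x' 0 with hneg | hnonneg
    · filter_upwards [hS] with z hz using hneg.trans_le (hu z hz).1
    have hx : max x' (u z₀ / 2) ∈ Ioo 0 a :=
      ⟨lt_max_of_lt_right (by linarith), max_lt (by linarith) (by linarith)⟩
    have hxu : max x' (u z₀ / 2) < u z₀ := max_lt hx' (by linarith)
    filter_upwards [hS, (hg _ hx).eventually (eventually_lt_nhds
      ((hsign z₀ hz₀ _ hx).1.2 hxu))] with z hz hgz
    exact (le_max_left _ _).trans_lt ((hsign z hz _ hx).1.1 hgz)
  · have hx : min x' ((u z₀ + a) / 2) ∈ Ioo 0 a :=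
      ⟨lt_min (by linarith) (by linarith), min_lt_of_right_lt (by linarith)⟩
    have hux : u z₀ < min x' ((u z₀ + a) / 2) := lt_min hx' (by linarith)
    filter_upwards [hS, (hg _ hx).eventually (eventually_gt_nhds
      ((hsign z₀ hz₀ _ hx).2.2 hux))] with z hz hgz
    exact ((hsign z hz _ hx).2.1 hgz).trans_le (min_le_left _ _)

lemma exists_forall_Ico_norm_lt {E : Type*} [SeminormedAddCommGroup E] {w : ℝ → E} {ε a : ℝ}
    (hε : 0 < ε) (ha : 0 < a) (hw : ContinuousWithinAt w (Ico 0 ε) 0) (hw0 : w 0 = 0) :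
    ∃ δ, 0 < δ ∧ δ ≤ ε ∧ ∀ z ∈ Ico 0 δ, ‖w z‖ < a := by
  rw [ContinuousWithinAt, nhdsWithin_Ico_eq_nhdsGE hε, hw0] at hw
  obtain ⟨δ, hδ, hsub⟩ := mem_nhdsGE_iff_exists_Ico_subset.1 <|
    hw.norm.eventually (eventually_lt_nhds (by simpa using ha))
  exact ⟨min δ ε, lt_min hδ hε, min_le_right _ _,
    fun z hz => hsub ⟨hz.1, hz.2.trans_le (min_le_left _ _)⟩⟩

noncomputable def doubleSeries (C : ℕ → ℕ → ℝ) (z x : ℝ) : ℝ :=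
  ∑' p : ℕ × ℕ, C p.1 p.2 * z ^ p.1 * x ^ p.2

section DoubleSeries

variable {C : ℕ → ℕ → ℝ} {R z x : ℝ}

lemma summable_doubleSeries (hC : ∀ i m, 0 ≤ C i m)
    (hS : Summable fun p : ℕ × ℕ => C p.1 p.2 * R ^ p.1 * R ^ p.2)
    (hz : 0 ≤ z) (hzR : z ≤ R) (hx : 0 ≤ x) (hxR : x ≤ R) :
    Summable fun p : ℕ × ℕ => C p.1 p.2 * z ^ p.1 * x ^ p.2 :=
  hS.of_nonneg_of_le (fun p => by have := hC p.1 p.2; positivity)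
    fun p => by have := hC p.1 p.2; have := hz.trans hzR; gcongr

lemma doubleSeries_nonneg (hC : ∀ i m, 0 ≤ C i m) (hz : 0 ≤ z) (hx : 0 ≤ x) :
    0 ≤ doubleSeries C z x :=
  tsum_nonneg fun p => by have := hC p.1 p.2; positivity

lemma doubleSeries_zero_left (hC0 : ∀ m, C 0 m = 0) (x : ℝ) : doubleSeries C 0 x = 0 := by
  rw [doubleSeries, ← tsum_zero]
  congr 1
  ext ⟨_ | i, m⟩ <;> simp [hC0]

lemma doubleSeries_zero_right_pos (hC : ∀ i m, 0 ≤ C i m)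
    (hS : Summable fun p : ℕ × ℕ => C p.1 p.2 * R ^ p.1 * R ^ p.2)
    (hCz : ∃ i, C i 0 ≠ 0) (hz : 0 < z) (hzR : z ≤ R) : 0 < doubleSeries C z 0 := by
  obtain ⟨i, hi⟩ := hCz
  refine (summable_doubleSeries hC hS hz.le hzR le_rfl (hz.le.trans hzR)).tsum_pos
    (fun p => by have := hC p.1 p.2; positivity) (i, 0) ?_
  have := (hC i 0).lt_of_ne' hi
  simp only [pow_zero, mul_one]
  positivity

lemma doubleSeries_le_div_mul (hC : ∀ i m, 0 ≤ C i m) (hC0 : ∀ m, C 0 m = 0) (hR : 0 < R)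
    (hS : Summable fun p : ℕ × ℕ => C p.1 p.2 * R ^ p.1 * R ^ p.2)
    (hz : 0 ≤ z) (hzR : z ≤ R) (hx : 0 ≤ x) (hxR : x ≤ R) :
    doubleSeries C z x ≤ z / R * doubleSeries C R R := by
  rw [doubleSeries, doubleSeries, ← tsum_mul_left]
  refine (summable_doubleSeries hC hS hz hzR hx hxR).tsum_le_tsum (fun p => ?_) (hS.mul_left _)
  calc C p.1 p.2 * z ^ p.1 * x ^ p.2 ≤ z / R * (C p.1 p.2 * R ^ p.1) * R ^ p.2 := by
        have := hC p.1 p.2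
        exact mul_le_mul (mul_pow_le_div_mul_mul_pow hR this hz hzR fun h => h ▸ hC0 _)
          (pow_le_pow_left₀ hx hxR _) (by positivity) (by positivity)
    _ = z / R * (C p.1 p.2 * R ^ p.1 * R ^ p.2) := by ring

lemma continuousOn_doubleSeries (hC : ∀ i m, 0 ≤ C i m)
    (hS : Summable fun p : ℕ × ℕ => C p.1 p.2 * R ^ p.1 * R ^ p.2) :
    ContinuousOn (fun q : ℝ × ℝ => doubleSeries C q.1 q.2) (Icc 0 R ×ˢ Icc 0 R) := by
  refine continuousOn_tsum (fun p => (by fun_prop : Continuous _).continuousOn) hS ?_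
  rintro p q ⟨⟨hz, hzR⟩, hx, hxR⟩
  have := hC p.1 p.2
  rw [Real.norm_of_nonneg (by positivity)]
  have := hz.trans hzR
  gcongr

lemma norm_tsum_le_doubleSeries (hC : ∀ i m, 0 ≤ C i m)
    (hS : Summable fun p : ℕ × ℕ => C p.1 p.2 * R ^ p.1 * R ^ p.2) (hz : 0 ≤ z) (hzR : z ≤ R)
    {w : ℂ} (hwR : ‖w‖ ≤ R) :
    ‖∑' p : ℕ × ℕ, (C p.1 p.2 : ℂ) * (z : ℂ) ^ p.1 * w ^ p.2‖ ≤ doubleSeries C z ‖w‖ := by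
  have hnorm : ∀ p : ℕ × ℕ, ‖(C p.1 p.2 : ℂ) * (z : ℂ) ^ p.1 * w ^ p.2‖ =
      C p.1 p.2 * z ^ p.1 * ‖w‖ ^ p.2 := fun p => by
    simp [abs_of_nonneg (hC _ _), abs_of_nonneg hz]
  refine (norm_tsum_le_tsum_norm ?_).trans_eq (tsum_congr hnorm)
  simpa only [hnorm] using summable_doubleSeries hC hS hz hzR (norm_nonneg w) hwR

lemma doubleSeries_div_pow_sub_le (hC : ∀ i m, 0 ≤ C i m) (hC0 : ∀ m, C 0 m = 0) (hR : 0 < R)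
    (hS : Summable fun p : ℕ × ℕ => C p.1 p.2 * R ^ p.1 * R ^ p.2) (n : ℕ)
    (hz : 0 ≤ z) (hzR : z ≤ R) {y v : ℝ} (hy : 0 < y) (hyv : y ≤ v) (hv : v ≤ R / 2) :
    doubleSeries C z v / v ^ n - doubleSeries C z y / y ^ n ≤
      z / R * doubleSeries C R R / (R / 2) ^ (n + 1) * (v - y) := by
  have hvR : v ≤ R := by linarith
  have hsum := fun t (ht : 0 ≤ t) (htR : t ≤ R) => summable_doubleSeries hC hS hz hzR ht htR
  unfold doubleSeries
  rw [← tsum_div_const, ← tsum_div_const,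
    ← ((hsum v (hy.le.trans hyv) hvR).div_const _).tsum_sub
      ((hsum y hy.le (hyv.trans hvR)).div_const _),
    ← tsum_mul_left, ← tsum_div_const, ← tsum_mul_right]
  refine Summable.tsum_le_tsum (fun p => ?_)
    (((hsum v (hy.le.trans hyv) hvR).div_const _).sub ((hsum y hy.le (hyv.trans hvR)).div_const _))
    (((hS.mul_left _).div_const _).mul_right _)
  have hc := hC p.1 p.2
  have hzi := mul_pow_le_div_mul_mul_pow hR hc hz hzR (i := p.1) fun h => h ▸ hC0 _
  calc C p.1 p.2 * z ^ p.1 * v ^ p.2 / v ^ n - C p.1 p.2 * z ^ p.1 * y ^ p.2 / y ^ n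
      = C p.1 p.2 * z ^ p.1 * (v ^ p.2 / v ^ n - y ^ p.2 / y ^ n) := by ring
    _ ≤ z / R * (C p.1 p.2 * R ^ p.1) * ((2 * (R / 2)) ^ p.2 / (R / 2) ^ (n + 1) * (v - y)) :=
        (mul_le_mul_of_nonneg_left (div_pow_sub_div_pow_le p.2 n hy hyv hv) (by positivity)).trans
          (mul_le_mul_of_nonneg_right hzi (by have := sub_nonneg.2 hyv; positivity))
    _ = z / R * (C p.1 p.2 * R ^ p.1 * R ^ p.2) / (R / 2) ^ (n + 1) * (v - y) := by ring

noncomputable def defect (C : ℕ → ℕ → ℝ) (n : ℕ) (z x : ℝ) : ℝ :=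
  x - doubleSeries C z x / x ^ n

lemma defect_eq_div {n : ℕ} (hx : 0 < x) :
    defect C n z x = (x ^ (n + 1) - doubleSeries C z x) / x ^ n := by
  rw [defect]
  field_simp
  ring

lemma defect_nonpos_iff {n : ℕ} (hx : 0 < x) :
    defect C n z x ≤ 0 ↔ x ^ (n + 1) ≤ doubleSeries C z x := by
  rw [defect_eq_div hx, div_le_iff₀ (pow_pos hx n), zero_mul, sub_nonpos]

lemma defect_eq_zero_iff {n : ℕ} (hx : 0 < x) :
    defect C n z x = 0 ↔ x ^ (n + 1) = doubleSeries C z x := by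
  rw [defect_eq_div hx, div_eq_zero_iff, sub_eq_zero, or_iff_left (pow_pos hx n).ne']

lemma defect_zero_left (hC0 : ∀ m, C 0 m = 0) (n : ℕ) (x : ℝ) : defect C n 0 x = x := by
  simp [defect, doubleSeries_zero_left hC0]

lemma strictMonoOn_defect (hC : ∀ i m, 0 ≤ C i m) (hC0 : ∀ m, C 0 m = 0) (hR : 0 < R)
    (hS : Summable fun p : ℕ × ℕ => C p.1 p.2 * R ^ p.1 * R ^ p.2) (n : ℕ)
    (hz : 0 ≤ z) (hzR : z ≤ R) (hsmall : z * doubleSeries C R R < R * (R / 2) ^ (n + 1)) :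
    StrictMonoOn (defect C n z) (Ioc 0 (R / 2)) := by
  intro y hy v hv hyv
  have hdiff := doubleSeries_div_pow_sub_le hC hC0 hR hS n hz hzR hy.1 hyv.le hv.2
  have hlt : z / R * doubleSeries C R R / (R / 2) ^ (n + 1) < 1 := by
    rw [div_lt_one (by positivity), div_mul_eq_mul_div, div_lt_iff₀ hR]
    linarith
  have := mul_lt_of_lt_one_left (sub_pos.2 hyv) hlt
  rw [defect, defect]
  linarith

lemma exists_pow_eq_doubleSeries (hC : ∀ i m, 0 ≤ C i m) (hC0 : ∀ m, C 0 m = 0) (hR : 0 < R)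
    (hS : Summable fun p : ℕ × ℕ => C p.1 p.2 * R ^ p.1 * R ^ p.2) (hCz : ∃ i, C i 0 ≠ 0)
    (n : ℕ) (hz : 0 < z) (hzR : z ≤ R) (hsmall : z * doubleSeries C R R < R * (R / 2) ^ (n + 1)) :
    ∃ x ∈ Ioo 0 (R / 2), x ^ (n + 1) = doubleSeries C z x := by
  have hcont : ContinuousOn (fun x => x ^ (n + 1) - doubleSeries C z x) (Icc 0 (R / 2)) :=
    (continuous_pow _).continuousOn.sub <| (continuousOn_doubleSeries hC hS).comp
      (continuousOn_const.prodMk continuousOn_id) fun x hx =>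
        ⟨⟨hz.le, hzR⟩, hx.1, hx.2.trans (half_le_self hR.le)⟩
  have hleft : 0 ^ (n + 1) - doubleSeries C z 0 < 0 := by
    simpa using doubleSeries_zero_right_pos hC hS hCz hz hzR
  have hright : 0 < (R / 2) ^ (n + 1) - doubleSeries C z (R / 2) := by
    have := doubleSeries_le_div_mul hC hC0 hR hS hz.le hzR (x := R / 2) (by positivity)
      (half_le_self hR.le)
    rw [div_mul_eq_mul_div, le_div_iff₀ hR] at this
    nlinarith
  obtain ⟨x, hx, hfx⟩ := intermediate_value_Ioo (by positivity) hcont ⟨hleft, hright⟩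
  exact ⟨x, hx, sub_eq_zero.1 hfx⟩

end DoubleSeries

structure IsRootBranch (C : ℕ → ℕ → ℝ) (n : ℕ) (a ε : ℝ) (u : ℝ → ℝ) : Prop where
  map_zero : u 0 = 0
  mem_Ioo : ∀ z ∈ Ioo 0 ε, u z ∈ Ioo 0 a
  defect_eq_zero : ∀ z ∈ Ioo 0 ε, defect C n z (u z) = 0
  strictMonoOn : ∀ z ∈ Ico 0 ε, StrictMonoOn (defect C n z) (Ioc 0 a)

lemma exists_isRootBranch {C : ℕ → ℕ → ℝ} {R : ℝ} (hC : ∀ i m, 0 ≤ C i m)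
    (hC0 : ∀ m, C 0 m = 0) (hR : 0 < R)
    (hS : Summable fun p : ℕ × ℕ => C p.1 p.2 * R ^ p.1 * R ^ p.2) (hCz : ∃ i, C i 0 ≠ 0)
    (n : ℕ) : ∃ ε, 0 < ε ∧ ε ≤ R / 2 ∧ ∃ u, IsRootBranch C n (R / 2) ε u := by
  set B := doubleSeries C R R
  have hB : 0 ≤ B := doubleSeries_nonneg hC hR.le hR.le
  set ε := min (R / 2) (R * (R / 2) ^ (n + 1) / (B + 1))
  have hsmall : ∀ z ∈ Ico 0 ε, z ≤ R ∧ z * B < R * (R / 2) ^ (n + 1) := by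
    rintro z ⟨hz, hzε⟩
    have h1 := hzε.trans_le (min_le_left _ _)
    have h2 := hzε.trans_le (min_le_right _ _)
    rw [lt_div_iff₀ (by positivity)] at h2
    exact ⟨by linarith, by nlinarith⟩
  choose! u hu using fun z (hz : z ∈ Ioo 0 ε) => exists_pow_eq_doubleSeries hC hC0 hR hS hCz n
    hz.1 (hsmall z ⟨hz.1.le, hz.2⟩).1 (hsmall z ⟨hz.1.le, hz.2⟩).2
  have hne : ∀ z ∈ Ioo 0 ε, Function.update u 0 0 z = u z := fun z hz =>
    Function.update_of_ne hz.1.ne' _ _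
  refine ⟨ε, lt_min (by positivity) (by positivity), min_le_left _ _, Function.update u 0 0,
    by simp, fun z hz => hne z hz ▸ (hu z hz).1, fun z hz => ?_, fun z hz => ?_⟩
  · rw [hne z hz, defect_eq_zero_iff (hu z hz).1.1]
    exact (hu z hz).2
  · exact strictMonoOn_defect hC hC0 hR hS n hz.1 (hsmall z hz).1 (hsmall z hz).2

namespace IsRootBranch

variable {C : ℕ → ℕ → ℝ} {n : ℕ} {a ε : ℝ} {u : ℝ → ℝ}

lemma pow_eq (hu : IsRootBranch C n a ε u) (hC0 : ∀ m, C 0 m = 0) :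
    ∀ z ∈ Ico 0 ε, u z ^ (n + 1) = doubleSeries C z (u z) := by
  rintro z ⟨hz, hzε⟩
  rcases hz.eq_or_lt with rfl | hz
  · rw [hu.map_zero, doubleSeries_zero_left hC0, zero_pow n.succ_ne_zero]
  · exact (defect_eq_zero_iff (hu.mem_Ioo z ⟨hz, hzε⟩).1).1 (hu.defect_eq_zero z ⟨hz, hzε⟩)

lemma le_of_pow_le (hu : IsRootBranch C n a ε u) {z x : ℝ} (hz : z ∈ Ioo 0 ε)
    (hx : x ∈ Ioc 0 a) (h : x ^ (n + 1) ≤ doubleSeries C z x) : x ≤ u z := by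
  have hmem := hu.mem_Ioo z hz
  refine ((hu.strictMonoOn z ⟨hz.1.le, hz.2⟩).le_iff_le hx ⟨hmem.1, hmem.2.le⟩).1 ?_
  rw [hu.defect_eq_zero z hz]
  exact (defect_nonpos_iff hx.1).2 h

lemma eq_of_pow_eq (hu : IsRootBranch C n a ε u) {z x : ℝ} (hz : z ∈ Ioo 0 ε)
    (hx : x ∈ Ioc 0 a) (h : x ^ (n + 1) = doubleSeries C z x) : x = u z := by
  have hmem := hu.mem_Ioo z hz
  refine (hu.strictMonoOn z ⟨hz.1.le, hz.2⟩).injOn hx ⟨hmem.1, hmem.2.le⟩ ?_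
  rw [hu.defect_eq_zero z hz]
  exact (defect_eq_zero_iff hx.1).2 h

lemma continuousOn {R : ℝ} (hu : IsRootBranch C n a ε u) (hC : ∀ i m, 0 ≤ C i m)
    (hC0 : ∀ m, C 0 m = 0) (hS : Summable fun p : ℕ × ℕ => C p.1 p.2 * R ^ p.1 * R ^ p.2)
    (ha : 0 < a) (haR : a ≤ R) (hεR : ε ≤ R) : ContinuousOn u (Ico 0 ε) := by
  have hmem : ∀ z ∈ Ico 0 ε, u z ∈ Ico 0 a := by
    rintro z ⟨hz, hzε⟩
    rcases hz.eq_or_lt with rfl | hz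
    · rw [hu.map_zero]; exact ⟨le_rfl, ha⟩
    · exact Ioo_subset_Ico_self (hu.mem_Ioo z ⟨hz, hzε⟩)
  have hsign : ∀ z ∈ Ico 0 ε, ∀ x ∈ Ioo 0 a,
      (defect C n z x < 0 ↔ x < u z) ∧ (0 < defect C n z x ↔ u z < x) := by
    rintro z ⟨hz, hzε⟩ x hx
    rcases hz.eq_or_lt with rfl | hz
    · simp [defect_zero_left hC0, hu.map_zero]
    have hmono := hu.strictMonoOn z ⟨hz.le, hzε⟩
    have hux : u z ∈ Ioc 0 a := Ioo_subset_Ioc_self (hu.mem_Ioo z ⟨hz, hzε⟩)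
    rw [← hu.defect_eq_zero z ⟨hz, hzε⟩]
    exact ⟨hmono.lt_iff_lt (Ioo_subset_Ioc_self hx) hux,
      hmono.lt_iff_lt hux (Ioo_subset_Ioc_self hx)⟩
  have hcont : ∀ x ∈ Ioo 0 a, ContinuousOn (defect C n · x) (Ico 0 ε) := fun x hx =>
    continuousOn_const.sub <| ((continuousOn_doubleSeries hC hS).comp
      (continuousOn_id.prodMk continuousOn_const) fun z hz =>
        ⟨⟨hz.1, hz.2.le.trans hεR⟩, hx.1.le, hx.2.le.trans haR⟩).div_const _
  exact fun z₀ hz₀ => continuousWithinAt_of_sign_change hmem hsign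
    (fun x hx => hcont x hx z₀ hz₀) hz₀

lemma exists_eqOn (hu : IsRootBranch C n a ε u) (hε : 0 < ε) (ha : 0 < a) {v : ℝ → ℝ}
    (hv : ContinuousOn v (Ico 0 ε)) (hv0 : v 0 = 0) (hvpos : ∀ z ∈ Ioo 0 ε, 0 < v z)
    (hveq : ∀ z ∈ Ico 0 ε, v z ^ (n + 1) = doubleSeries C z (v z)) :
    ∃ δ, 0 < δ ∧ EqOn v u (Ico 0 δ) := by
  obtain ⟨δ, hδ, hδε, hlt⟩ := exists_forall_Ico_norm_lt hε ha (hv 0 ⟨le_rfl, hε⟩) hv0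
  refine ⟨δ, hδ, fun z hz => ?_⟩
  rcases hz.1.eq_or_lt with rfl | hpos
  · rw [hv0, hu.map_zero]
  have hzε : z ∈ Ioo 0 ε := ⟨hpos, hz.2.trans_le hδε⟩
  exact hu.eq_of_pow_eq hzε ⟨hvpos z hzε, (le_abs_self _).trans (hlt z hz).le⟩
    (hveq z (Ioo_subset_Ico_self hzε))

lemma exists_norm_le {R : ℝ} (hu : IsRootBranch C n a ε u) (hC : ∀ i m, 0 ≤ C i m)
    (hS : Summable fun p : ℕ × ℕ => C p.1 p.2 * R ^ p.1 * R ^ p.2) (hε : 0 < ε) (ha : 0 < a)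
    (haR : a ≤ R) (hεR : ε ≤ R) {w : ℝ → ℂ} (hw : ContinuousOn w (Ico 0 ε)) (hw0 : w 0 = 0)
    (hweq : ∀ z ∈ Ico 0 ε,
      w z ^ (n + 1) = ∑' p : ℕ × ℕ, (C p.1 p.2 : ℂ) * (z : ℂ) ^ p.1 * w z ^ p.2) :
    ∃ δ, 0 < δ ∧ ∀ z ∈ Ioo 0 δ, ‖w z‖ ≤ u z := by
  obtain ⟨δ, hδ, hδε, hlt⟩ := exists_forall_Ico_norm_lt hε ha (hw 0 ⟨le_rfl, hε⟩) hw0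
  refine ⟨δ, hδ, fun z hz => ?_⟩
  have hzε : z ∈ Ioo 0 ε := ⟨hz.1, hz.2.trans_le hδε⟩
  have hwa := hlt z (Ioo_subset_Ico_self hz)
  rcases (norm_nonneg (w z)).eq_or_lt with h | h
  · exact h ▸ (hu.mem_Ioo z hzε).1.le
  refine hu.le_of_pow_le hzε ⟨h, hwa.le⟩ ?_
  rw [← norm_pow, hweq z (Ioo_subset_Ico_self hzε)]
  exact norm_tsum_le_doubleSeries hC hS hz.1.le (hzε.2.le.trans hεR) (hwa.le.trans haR)

end IsRootBranch

theorem stmt10_general (k : ℕ) (hk : 1 ≤ k) (Cc : ℕ → ℕ → ℝ)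
    (hnn : ∀ i m, 0 ≤ Cc i m)
    (hzdvd : ∀ m, Cc 0 m = 0)
    (hC0 : ∃ i, Cc i 0 ≠ 0)
    (hconv : ∃ R : ℝ, 0 < R ∧ Summable (fun p : ℕ × ℕ => Cc p.1 p.2 * R ^ p.1 * R ^ p.2)) :
    ∃ ε : ℝ, 0 < ε ∧ ∃ u1 : ℝ → ℝ,
      ContinuousOn u1 (Ico 0 ε) ∧ u1 0 = 0 ∧
      (∀ z ∈ Ioo 0 ε, 0 < u1 z) ∧
      (∀ z ∈ Ico 0 ε,
        (u1 z) ^ k = ∑' p : ℕ × ℕ, Cc p.1 p.2 * z ^ p.1 * (u1 z) ^ p.2) ∧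
      -- uniqueness: `u₁` is the only positive real solution vanishing at `0`
      (∀ v : ℝ → ℝ, ContinuousOn v (Ico 0 ε) → v 0 = 0 →
        (∀ z ∈ Ioo 0 ε, 0 < v z) →
        (∀ z ∈ Ico 0 ε,
          (v z) ^ k = ∑' p : ℕ × ℕ, Cc p.1 p.2 * z ^ p.1 * (v z) ^ p.2) →
        ∃ δ : ℝ, 0 < δ ∧ EqOn v u1 (Ico 0 δ)) ∧
      -- domination: any solution vanishing at `0` is dominated in modulus by `u₁`
      (∀ w : ℝ → ℂ, ContinuousOn w (Ico 0 ε) → w 0 = 0 →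
        (∀ z ∈ Ico 0 ε,
          (w z) ^ k = ∑' p : ℕ × ℕ, (Cc p.1 p.2 : ℂ) * (z : ℂ) ^ p.1 * (w z) ^ p.2) →
        ∃ δ : ℝ, 0 < δ ∧ ∀ z ∈ Ioo 0 δ, ‖w z‖ ≤ u1 z) := by
  obtain ⟨n, rfl⟩ : ∃ n, k = n + 1 := ⟨k - 1, by omega⟩
  obtain ⟨R, hR, hS⟩ := hconv
  obtain ⟨ε, hε, hεa, u, hu⟩ := exists_isRootBranch hnn hzdvd hR hS hC0 n
  have ha : 0 < R / 2 := by positivity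
  have haR : R / 2 ≤ R := half_le_self hR.le
  exact ⟨ε, hε, u, hu.continuousOn hnn hzdvd hS ha haR (hεa.trans haR), hu.map_zero,
    fun z hz => (hu.mem_Ioo z hz).1, hu.pow_eq hzdvd,
    fun _ hv hv0 hvpos hveq => hu.exists_eqOn hε ha hv hv0 hvpos hveq,
    fun _ hw hw0 hweq => hu.exists_norm_le hnn hS hε ha haR (hεa.trans haR) hw hw0 hweq⟩

/-- Let `C(z,u) = ∑ Cc i m z^i u^m` have non-negative coefficients with
`z ∣ C`, `u^k ∤ C`, `C(z,0) ≠ 0`, `k ≥ 1`, and positive radius of convergence.  Among the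
solutions `u(z)` with `u(0) = 0` of `u^k = C(z,u)` there is exactly one, `u₁`, that is
real and positive for small `z > 0`, and every (complex, continuous) solution vanishing at
`0` satisfies `|u(z)| ≤ u₁(z)` for all sufficiently small `z > 0`. -/
theorem stmt10 (k : ℕ) (hk : 1 ≤ k) (Cc : ℕ → ℕ → ℝ)
    (hnn : ∀ i m, 0 ≤ Cc i m)
    (hzdvd : ∀ m, Cc 0 m = 0)
    (hukndvd : ∃ i m, m < k ∧ Cc i m ≠ 0)
    (hC0 : ∃ i, Cc i 0 ≠ 0)
    (hconv : ∃ R : ℝ, 0 < R ∧ Summable (fun p : ℕ × ℕ => Cc p.1 p.2 * R ^ p.1 * R ^ p.2)) :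
    ∃ ε : ℝ, 0 < ε ∧ ∃ u1 : ℝ → ℝ,
      ContinuousOn u1 (Ico 0 ε) ∧ u1 0 = 0 ∧
      (∀ z ∈ Ioo 0 ε, 0 < u1 z) ∧
      (∀ z ∈ Ico 0 ε,
        (u1 z) ^ k = ∑' p : ℕ × ℕ, Cc p.1 p.2 * z ^ p.1 * (u1 z) ^ p.2) ∧
      -- uniqueness: `u₁` is the only positive real solution vanishing at `0`
      (∀ v : ℝ → ℝ, ContinuousOn v (Ico 0 ε) → v 0 = 0 →
        (∀ z ∈ Ioo 0 ε, 0 < v z) →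
        (∀ z ∈ Ico 0 ε,
          (v z) ^ k = ∑' p : ℕ × ℕ, Cc p.1 p.2 * z ^ p.1 * (v z) ^ p.2) →
        ∃ δ : ℝ, 0 < δ ∧ EqOn v u1 (Ico 0 δ)) ∧
      -- domination: any solution vanishing at `0` is dominated in modulus by `u₁`
      (∀ w : ℝ → ℂ, ContinuousOn w (Ico 0 ε) → w 0 = 0 →
        (∀ z ∈ Ico 0 ε,
          (w z) ^ k = ∑' p : ℕ × ℕ, (Cc p.1 p.2 : ℂ) * (z : ℂ) ^ p.1 * (w z) ^ p.2) →
        ∃ δ : ℝ, 0 < δ ∧ ∀ z ∈ Ioo 0 δ, ‖w z‖ ≤ u1 z) :=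
  stmt10_general k hk Cc hnn hzdvd hC0 hconv
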